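/- arXiv:0804.1091 — 2 statements merged into one kernel-verified Lean document; each statement's English description precedes it below -/
import Mathlib

section
/- Let A be a (not necessarily commutative) ring, δ = (δ_1,…,δ_n) an n-tuple of pairwise commuting derivations of A, and {x^[α] : α ∈ I} a δ-descent, where I = {α ∈ ℕ^n : α_i ≤ d_i for all i} and each d_i ∈ ℕ ∪ {∞}. Then for every α ∈ I one has N_α = ⊕_{0 ≤ β ≤ α} A^δ x^[β] = ⊕_{0 ≤ β ≤ α} x^[β] A^δ; that is, every element of N_α is uniquely a sum Σ_{0 ≤ β ≤ α} c_β x^[β] with all c_β ∈ A^δ, and also uniquely a sum Σ_{0 ≤ β ≤ α} x^[β] c'_β with all c'_β ∈ A^δ. -/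
/-- `multiIter δ α = δ_1^{α_1} ∘ ⋯ ∘ δ_n^{α_n}` (the maps are assumed to commute pairwise,
so the order of composition is irrelevant). -/
def multiIter {A : Type*} {n : ℕ} (δ : Fin n → A → A) (α : Fin n → ℕ) : A → A :=
  (List.finRange n).foldr (fun i f => (δ i)^[α i] ∘ f) id

/-- A family `x : (Fin n → ℕ) → A`, thought of as defined on
`I = {α : ∀ i, α i ≤ d i}`, is a `δ`-descent if `x 0 = 1` and
`δ^α (x β) = x (β - α)` for all `α ∈ ℕⁿ`, `β ∈ I` (where `x` of an index with a negative
component is interpreted as `0`). -/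
def IsDescent {A : Type*} [Ring A] {n : ℕ} (δ : Fin n → A → A) (d : Fin n → ℕ∞)
    (x : (Fin n → ℕ) → A) : Prop :=
  x 0 = 1 ∧ ∀ α β : Fin n → ℕ, (∀ i, (β i : ℕ∞) ≤ d i) →
    (α ≤ β → multiIter δ α (x β) = x (β - α)) ∧ (¬ α ≤ β → multiIter δ α (x β) = 0)

/-!
Induct on `α` along the coordinatewise order. If `α_i > 0`, the operator `δ_i^{α_i}` maps `N_α`
into `N_{α - α_i e_i}`; on a sum `∑_{β ≤ α} c_β x^[β]` with constant coefficients it kills the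
terms with `β_i < α_i` and shifts the layer `β_i = α_i` down to `β_i = 0`. For uniqueness this
forces the top-layer coefficients to vanish, and the rest is a relation in `N_{α - e_i}`. For
existence, decompose `δ_i^{α_i} a`, lift it back to the top layer and subtract: the remainder
lies in `N_{α - e_i}`. The version with coefficients on the right is the left one in `Aᵐᵒᵖ`.
-/

open Finset MulOpposite

section Multiindex

variable {ι : Type*} [DecidableEq ι] {α β : ι → ℕ} {i : ι} {k : ℕ}

lemma Pi.single_le_iff_le_apply : Pi.single i k ≤ β ↔ k ≤ β i := by
  refine ⟨fun h => by simpa using h i, fun h j => ?_⟩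
  rcases eq_or_ne j i with rfl | hj
  · simpa using h
  · simp [Pi.single_eq_of_ne hj]

lemma sub_single_lt (hk : 0 < k) (hkα : k ≤ α i) : α - Pi.single i k < α :=
  Pi.lt_def.2 ⟨tsub_le_self, i, by simp only [Pi.sub_apply, Pi.single_eq_same]; omega⟩

lemma le_sub_single_one_or_le_apply (h : β ≤ α) (i : ι) :
    β ≤ α - Pi.single i 1 ∨ α i ≤ β i := by
  refine or_iff_not_imp_right.2 fun hi j => ?_
  rcases eq_or_ne j i with rfl | hj
  · simp only [Pi.sub_apply, Pi.single_eq_same]; omega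
  · simpa [Pi.single_eq_of_ne hj] using h j

end Multiindex

lemma foldr_iterate_single {A : Type*} {n : ℕ} (δ : Fin n → A → A) (i : Fin n) (k : ℕ)
    (l : List (Fin n)) :
    l.foldr (fun j f => (δ j)^[(Pi.single i k : Fin n → ℕ) j] ∘ f) id = (δ i)^[k * l.count i] := by
  induction l with
  | nil => simp
  | cons j l ih =>
    rw [List.foldr_cons, ih, List.count_cons]
    rcases eq_or_ne j i with rfl | h
    · simp only [Pi.single_eq_same, beq_self_eq_true, if_true]
      rw [← Function.iterate_add, mul_add_one, add_comm]
    · simp [h]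

lemma multiIter_single {A : Type*} {n : ℕ} (δ : Fin n → A → A) (i : Fin n) (k : ℕ) :
    multiIter δ (Pi.single i k) = (δ i)^[k] := by
  rw [multiIter, foldr_iterate_single,
    List.count_eq_one_of_mem (List.nodup_finRange n) (List.mem_finRange i), mul_one]

section Opposite

variable {M : Type*} [AddZeroClass M]

def AddMonoid.End.mulOp (D : AddMonoid.End M) : AddMonoid.End Mᵐᵒᵖ :=
  AddMonoidHom.mulOp D

@[simp]
lemma AddMonoid.End.mulOp_apply (D : AddMonoid.End M) (a : Mᵐᵒᵖ) : D.mulOp a = op (D (unop a)) :=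
  rfl

lemma AddMonoid.End.mulOp_pow_apply (D : AddMonoid.End M) (k : ℕ) (a : Mᵐᵒᵖ) :
    (D.mulOp ^ k) a = op ((D ^ k) (unop a)) :=
  ((Function.Semiconj.iterate_right (f := op) (fun _ => rfl) k) (unop a)).symm

lemma Commute.mulOp {D D' : AddMonoid.End M} (h : Commute D D') : Commute D.mulOp D'.mulOp :=
  AddMonoidHom.ext fun a => congrArg MulOpposite.op (DFunLike.congr_fun h.eq a.unop)

end Opposite

section Descent

variable {A : Type*} [Ring A]

/-- Mathlib's `Derivation` needs a commutative ring. -/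
def IsDerivation (D : AddMonoid.End A) : Prop :=
  ∀ a b, D (a * b) = D a * b + a * D b

lemma IsDerivation.pow_apply_mul_of_apply_eq_zero {D : AddMonoid.End A} (hD : IsDerivation D)
    {c : A} (hc : D c = 0) (k : ℕ) (b : A) : (D ^ k) (c * b) = c * (D ^ k) b := by
  induction k with
  | zero => rfl
  | succ k ih =>
    simp only [pow_succ', AddMonoid.End.coe_mul, Function.comp_apply, ih, hD _, hc, zero_mul,
      zero_add]

variable {n : ℕ} {δ : Fin n → AddMonoid.End A} {x : (Fin n → ℕ) → A} {α : Fin n → ℕ}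

/-- `IsDescent` tested one derivation at a time, on the box below `α`; in this form it passes
verbatim to `Aᵐᵒᵖ`. -/
def IsBoxDescent (δ : Fin n → AddMonoid.End A) (x : (Fin n → ℕ) → A) (α : Fin n → ℕ) : Prop :=
  x 0 = 1 ∧ ∀ β ≤ α, ∀ i k, (δ i ^ k) (x β) = if k ≤ β i then x (β - Pi.single i k) else 0

lemma IsDescent.isBoxDescent {d : Fin n → ℕ∞} (hx : IsDescent (fun i => ⇑(δ i)) d x)
    (hα : ∀ i, (α i : ℕ∞) ≤ d i) : IsBoxDescent δ x α := by
  refine ⟨hx.1, fun β hβ i k => ?_⟩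
  have hβd : ∀ j, (β j : ℕ∞) ≤ d j := fun j => (Nat.cast_le.2 (hβ j)).trans (hα j)
  rw [AddMonoid.End.coe_pow, ← multiIter_single (fun i => ⇑(δ i))]
  split_ifs with h
  · exact (hx.2 _ β hβd).1 (Pi.single_le_iff_le_apply.2 h)
  · exact (hx.2 _ β hβd).2 (mt Pi.single_le_iff_le_apply.1 h)

lemma IsBoxDescent.mono {α' : Fin n → ℕ} (hx : IsBoxDescent δ x α) (h : α' ≤ α) :
    IsBoxDescent δ x α' :=
  ⟨hx.1, fun β hβ => hx.2 β (hβ.trans h)⟩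

lemma pow_apply_sum_const_mul (hδ : ∀ i, IsDerivation (δ i)) (hx : IsBoxDescent δ x α)
    {c : (Fin n → ℕ) → A} (hc : ∀ β i, δ i (c β) = 0) {i : Fin n} {k : ℕ} (hk : k ≤ α i) :
    (δ i ^ k) (∑ β ∈ Icc 0 α, c β * x β) =
      ∑ γ ∈ Icc 0 (α - Pi.single i k), c (γ + Pi.single i k) * x γ := by
  set s : Fin n → ℕ := Pi.single i k
  have hs : s ≤ α := Pi.single_le_iff_le_apply.2 hk
  calc (δ i ^ k) (∑ β ∈ Icc 0 α, c β * x β) = ∑ β ∈ Icc 0 α with k ≤ β i, c β * x (β - s) := by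
        rw [map_sum, sum_filter]
        refine sum_congr rfl fun β hβ => ?_
        rw [(hδ i).pow_apply_mul_of_apply_eq_zero (hc β i), hx.2 β (mem_Icc.1 hβ).2,
          mul_ite, mul_zero]
    _ = ∑ β ∈ Icc s α, c β * x (β - s) := by
        congr 1
        ext β
        simp only [mem_filter, mem_Icc, ← Pi.single_le_iff_le_apply]
        exact ⟨fun h => ⟨h.2, h.1.2⟩, fun h => ⟨⟨zero_le, h.2⟩, h.1⟩⟩
    _ = ∑ γ ∈ Icc 0 (α - s), c (γ + s) * x γ := by
        rw [← zero_add s, ← tsub_add_cancel_of_le hs, ← map_add_right_Icc, sum_map]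
        simp

/-- The paper's `N_α`. -/
def iterateKer (δ : Fin n → AddMonoid.End A) (α : Fin n → ℕ) : AddSubgroup A :=
  ⨅ i, AddMonoidHom.ker (δ i ^ (α i + 1))

lemma mem_iterateKer {a : A} : a ∈ iterateKer δ α ↔ ∀ i, (δ i ^ (α i + 1)) a = 0 := by
  simp only [iterateKer, AddSubgroup.mem_iInf]
  rfl

/-- `∑_{β ≤ α} A^δ x^[β]`. -/
def descentSpan (δ : Fin n → AddMonoid.End A) (x : (Fin n → ℕ) → A) (α : Fin n → ℕ) :
    AddSubgroup A where
  carrier := {a | ∃ c : (Fin n → ℕ) → A, (∀ β i, δ i (c β) = 0) ∧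
    a = ∑ β ∈ Icc 0 α, c β * x β}
  zero_mem' := ⟨0, by simp, by simp⟩
  add_mem' := by
    rintro _ _ ⟨c, hc, rfl⟩ ⟨c', hc', rfl⟩
    exact ⟨c + c', by simp [hc, hc'], by simp [add_mul, sum_add_distrib]⟩
  neg_mem' := by
    rintro _ ⟨c, hc, rfl⟩
    exact ⟨-c, by simp [hc], by simp⟩

lemma descentSpan_mono {α' : Fin n → ℕ} (h : α' ≤ α) :
    descentSpan δ x α' ≤ descentSpan δ x α := by
  classical
  rintro _ ⟨c, hc, rfl⟩
  refine ⟨fun β => if β ∈ Icc 0 α' then c β else 0,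
    fun β i => by dsimp only; split_ifs <;> simp [hc], ?_⟩
  simp only [ite_mul, zero_mul]
  rw [sum_ite_mem, inter_eq_right.2 (Icc_subset_Icc_right h)]

lemma descentSpan_le_iterateKer (hδ : ∀ i, IsDerivation (δ i)) (hx : IsBoxDescent δ x α) :
    descentSpan δ x α ≤ iterateKer δ α := by
  rintro _ ⟨c, hc, rfl⟩
  refine mem_iterateKer.2 fun i => ?_
  rw [map_sum]
  refine sum_eq_zero fun β hβ => ?_
  have hβα := (mem_Icc.1 hβ).2
  have hβi : β i ≤ α i := hβα i
  rw [(hδ i).pow_apply_mul_of_apply_eq_zero (hc β i), hx.2 β hβα, if_neg (by omega), mul_zero]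

lemma pow_apply_mem_iterateKer (hcomm : ∀ i j, Commute (δ i) (δ j)) {a : A}
    (ha : a ∈ iterateKer δ α) {i : Fin n} {k : ℕ} (hk : k ≤ α i) :
    (δ i ^ k) a ∈ iterateKer δ (α - Pi.single i k) := by
  rw [mem_iterateKer] at ha ⊢
  intro j
  rcases eq_or_ne j i with rfl | hj
  · have hexp : (α - Pi.single j k : Fin n → ℕ) j + 1 + k = α j + 1 := by simp; omega
    have := ha j
    rwa [← hexp, pow_add] at this
  · rw [Pi.sub_apply, Pi.single_eq_of_ne hj, tsub_zero]
    calc (δ j ^ (α j + 1)) ((δ i ^ k) a) = (δ i ^ k) ((δ j ^ (α j + 1)) a) :=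
          DFunLike.congr_fun ((hcomm j i).pow_pow (α j + 1) k).eq a
      _ = 0 := by rw [ha j, map_zero]

lemma mem_iterateKer_sub_single_one {a : A} (ha : a ∈ iterateKer δ α) {i : Fin n}
    (hi : α i ≠ 0) (hai : (δ i ^ α i) a = 0) : a ∈ iterateKer δ (α - Pi.single i 1) := by
  rw [mem_iterateKer] at ha ⊢
  intro j
  rcases eq_or_ne j i with rfl | hj
  · rwa [Pi.sub_apply, Pi.single_eq_same, Nat.sub_add_cancel (Nat.one_le_iff_ne_zero.2 hi)]
  · rw [Pi.sub_apply, Pi.single_eq_of_ne hj, tsub_zero]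
    exact ha j

lemma iterateKer_le_descentSpan (hδ : ∀ i, IsDerivation (δ i))
    (hcomm : ∀ i j, Commute (δ i) (δ j)) (hx : IsBoxDescent δ x α) :
    iterateKer δ α ≤ descentSpan δ x α := by
  induction α using WellFoundedLT.induction with
  | _ α ih =>
  intro a ha
  rcases eq_or_ne α 0 with rfl | hα
  · exact ⟨fun _ => a, fun _ i => by simpa using mem_iterateKer.1 ha i, by simp [hx.1]⟩
  obtain ⟨i, hi⟩ := Function.ne_iff.1 hα
  set s : Fin n → ℕ := Pi.single i (α i)
  obtain ⟨c, hc, hb⟩ := ih (α - s) (sub_single_lt (Nat.pos_of_ne_zero hi) le_rfl)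
    (hx.mono tsub_le_self) (pow_apply_mem_iterateKer hcomm ha le_rfl)
  let c' : (Fin n → ℕ) → A := fun β => if α i ≤ β i then c (β - s) else 0
  have hc' : ∀ β j, δ j (c' β) = 0 := fun β j => by simp only [c']; split_ifs <;> simp [hc]
  let t := ∑ β ∈ Icc 0 α, c' β * x β
  have ht : t ∈ descentSpan δ x α := ⟨c', hc', rfl⟩
  have hat : (δ i ^ α i) (a - t) = 0 := by
    rw [map_sub, sub_eq_zero, hb, pow_apply_sum_const_mul hδ hx hc' le_rfl]
    exact sum_congr rfl fun γ _ => by simp [c', s]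
  have hrest := ih (α - Pi.single i 1) (sub_single_lt one_pos (Nat.one_le_iff_ne_zero.2 hi))
    (hx.mono tsub_le_self) (mem_iterateKer_sub_single_one
      (sub_mem ha (descentSpan_le_iterateKer hδ hx ht)) hi hat)
  simpa using add_mem (descentSpan_mono tsub_le_self hrest) ht

lemma coeff_eq_zero_of_sum_const_mul_eq_zero (hδ : ∀ i, IsDerivation (δ i))
    (hx : IsBoxDescent δ x α) {c : (Fin n → ℕ) → A} (hc : ∀ β i, δ i (c β) = 0)
    (h : ∑ β ∈ Icc 0 α, c β * x β = 0) : ∀ β ∈ Icc 0 α, c β = 0 := by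
  induction α using WellFoundedLT.induction generalizing c with
  | _ α ih =>
  rcases eq_or_ne α 0 with rfl | hα
  · simpa [hx.1] using h
  obtain ⟨i, hi⟩ := Function.ne_iff.1 hα
  set s : Fin n → ℕ := Pi.single i (α i)
  have htop : ∀ γ ∈ Icc 0 (α - s), c (γ + s) = 0 :=
    ih (α - s) (sub_single_lt (Nat.pos_of_ne_zero hi) le_rfl) (hx.mono tsub_le_self)
      (fun γ => hc (γ + s)) (by rw [← pow_apply_sum_const_mul hδ hx hc le_rfl, h, map_zero])
  have hlow : ∀ β ∈ Icc 0 α, β ∉ Icc 0 (α - Pi.single i 1) → c β = 0 := by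
    intro β hβ hβ'
    have hsβ : s ≤ β := Pi.single_le_iff_le_apply.2 <|
      ((le_sub_single_one_or_le_apply (mem_Icc.1 hβ).2 i).resolve_left fun h' =>
        hβ' (mem_Icc.2 ⟨zero_le, h'⟩))
    simpa [tsub_add_cancel_of_le hsβ] using
      htop (β - s) (mem_Icc.2 ⟨zero_le, tsub_le_tsub_right (mem_Icc.1 hβ).2 s⟩)
  have hsum : ∑ β ∈ Icc 0 (α - Pi.single i 1), c β * x β = 0 := by
    rw [sum_subset (Icc_subset_Icc_right (tsub_le_self : α - Pi.single i 1 ≤ α))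
      fun β hβ hβ' => by rw [hlow β hβ hβ', zero_mul], h]
  have hrest := ih (α - Pi.single i 1) (sub_single_lt one_pos (Nat.one_le_iff_ne_zero.2 hi))
    (hx.mono tsub_le_self) hc hsum
  exact fun β hβ => by_cases (hrest β) (hlow β hβ)

theorem iterateKer_eq_descentSpan (hδ : ∀ i, IsDerivation (δ i))
    (hcomm : ∀ i j, Commute (δ i) (δ j)) (hx : IsBoxDescent δ x α) :
    iterateKer δ α = descentSpan δ x α :=
  le_antisymm (iterateKer_le_descentSpan hδ hcomm hx) (descentSpan_le_iterateKer hδ hx)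

theorem eq_of_sum_const_mul_eq (hδ : ∀ i, IsDerivation (δ i)) (hx : IsBoxDescent δ x α)
    (c c' : (Fin n → ℕ) → A) (hc : ∀ β i, δ i (c β) = 0) (hc' : ∀ β i, δ i (c' β) = 0)
    (h : ∑ β ∈ Icc 0 α, c β * x β = ∑ β ∈ Icc 0 α, c' β * x β) :
    ∀ β ∈ Icc 0 α, c β = c' β := fun β hβ =>
  sub_eq_zero.1 <| coeff_eq_zero_of_sum_const_mul_eq_zero hδ hx (c := c - c')
    (by simp [hc, hc']) (by simp [sub_mul, h]) β hβ

lemma IsDerivation.mulOp {D : AddMonoid.End A} (hD : IsDerivation D) : IsDerivation D.mulOp :=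
  fun a b => unop_injective <| by simp [hD _ _, add_comm]

lemma IsBoxDescent.mulOp (hx : IsBoxDescent δ x α) :
    IsBoxDescent (fun i => (δ i).mulOp) (fun β => op (x β)) α := by
  refine ⟨by simp [hx.1], fun β hβ i k => ?_⟩
  rw [AddMonoid.End.mulOp_pow_apply, unop_op, hx.2 β hβ i k]
  split_ifs <;> simp

lemma op_mem_iterateKer_mulOp {a : A} :
    op a ∈ iterateKer (fun i => (δ i).mulOp) α ↔ a ∈ iterateKer δ α := by
  simp only [mem_iterateKer, AddMonoid.End.mulOp_pow_apply, unop_op, op_eq_zero_iff]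

theorem mem_iterateKer_iff_exists_sum_mul (hδ : ∀ i, IsDerivation (δ i))
    (hcomm : ∀ i j, Commute (δ i) (δ j)) (hx : IsBoxDescent δ x α) {a : A} :
    a ∈ iterateKer δ α ↔
      ∃ c : (Fin n → ℕ) → A, (∀ β i, δ i (c β) = 0) ∧ a = ∑ β ∈ Icc 0 α, x β * c β := by
  rw [← op_mem_iterateKer_mulOp, iterateKer_eq_descentSpan (fun i => (hδ i).mulOp)
    (fun i j => (hcomm i j).mulOp) hx.mulOp]
  constructor
  · rintro ⟨c, hc, h⟩
    exact ⟨fun β => unop (c β), fun β i => congrArg unop (hc β i),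
      op_injective (by simpa using h)⟩
  · rintro ⟨c, hc, rfl⟩
    exact ⟨fun β => op (c β), by simp [hc], by simp⟩

theorem eq_of_sum_mul_const_eq (hδ : ∀ i, IsDerivation (δ i)) (hx : IsBoxDescent δ x α)
    (c c' : (Fin n → ℕ) → A) (hc : ∀ β i, δ i (c β) = 0) (hc' : ∀ β i, δ i (c' β) = 0)
    (h : ∑ β ∈ Icc 0 α, x β * c β = ∑ β ∈ Icc 0 α, x β * c' β) :
    ∀ β ∈ Icc 0 α, c β = c' β := fun β hβ =>
  op_injective <| eq_of_sum_const_mul_eq (fun i => (hδ i).mulOp) hx.mulOp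
    (fun β => op (c β)) (fun β => op (c' β)) (by simp [hc]) (by simp [hc'])
    (by simpa using congrArg op h) β hβ

end Descent

/-- **Lemma (N_α = ⊕ A^δ x^[β] = ⊕ x^[β] A^δ).**
Let `A` be a ring, `δ = (δ_1,…,δ_n)` pairwise commuting derivations of `A`, and
`{x^[α] : α ∈ I}` a `δ`-descent, `I = {α : α_i ≤ d_i}`.  For every `α ∈ I`,
an element `a` belongs to `N_α = {a : δ_i^{α_i+1} a = 0 ∀ i}` iff it is a sum
`Σ_{0 ≤ β ≤ α} c_β x^[β]` with all `c_β ∈ A^δ`, the coefficients `c_β` being unique;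
and likewise with coefficients on the right. -/
theorem descent_filtration_decomposition
    {A : Type*} [Ring A] {n : ℕ} (δ : Fin n → A → A)
    (hadd : ∀ i a b, δ i (a + b) = δ i a + δ i b)
    (hleib : ∀ i a b, δ i (a * b) = δ i a * b + a * δ i b)
    (hcomm : ∀ i j a, δ i (δ j a) = δ j (δ i a))
    (d : Fin n → ℕ∞) (x : (Fin n → ℕ) → A) (hx : IsDescent δ d x)
    (α : Fin n → ℕ) (hα : ∀ i, (α i : ℕ∞) ≤ d i) :
    (∀ a : A, (∀ i, (δ i)^[α i + 1] a = 0) ↔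
        ∃ c : (Fin n → ℕ) → A, (∀ β i, δ i (c β) = 0) ∧
          a = ∑ β ∈ Finset.Icc 0 α, c β * x β) ∧
    (∀ c c' : (Fin n → ℕ) → A, (∀ β i, δ i (c β) = 0) → (∀ β i, δ i (c' β) = 0) →
        (∑ β ∈ Finset.Icc 0 α, c β * x β) = (∑ β ∈ Finset.Icc 0 α, c' β * x β) →
        ∀ β ∈ Finset.Icc 0 α, c β = c' β) ∧
    (∀ a : A, (∀ i, (δ i)^[α i + 1] a = 0) ↔
        ∃ c : (Fin n → ℕ) → A, (∀ β i, δ i (c β) = 0) ∧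
          a = ∑ β ∈ Finset.Icc 0 α, x β * c β) ∧
    (∀ c c' : (Fin n → ℕ) → A, (∀ β i, δ i (c β) = 0) → (∀ β i, δ i (c' β) = 0) →
        (∑ β ∈ Finset.Icc 0 α, x β * c β) = (∑ β ∈ Finset.Icc 0 α, x β * c' β) →
        ∀ β ∈ Finset.Icc 0 α, c β = c' β) := by
  let D : Fin n → AddMonoid.End A := fun i => AddMonoidHom.mk' (δ i) (hadd i)
  have hD : ∀ i, IsDerivation (D i) := hleib
  have hDcomm : ∀ i j, Commute (D i) (D j) := fun i j => AddMonoidHom.ext (hcomm i j)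
  have hDx : IsBoxDescent D x α := IsDescent.isBoxDescent hx hα
  have hN : ∀ a, (∀ i, (δ i)^[α i + 1] a = 0) ↔ a ∈ iterateKer D α := fun _ =>
    (mem_iterateKer (δ := D)).symm
  refine ⟨fun a => ?_, eq_of_sum_const_mul_eq hD hDx, fun a => ?_, eq_of_sum_mul_const_eq hD hDx⟩
  · rw [hN, iterateKer_eq_descentSpan hD hDcomm hDx]
    rfl
  · rw [hN]
    exact mem_iterateKer_iff_exists_sum_mul hD hDcomm hDx
end

section
/- Let A be a commutative algebra over a field K of characteristic p > 0 and δ a K-derivation of A. Suppose there exist elements y_0, y_1, …, y_{d−1} ∈ A (d ∈ ℕ, d ≥ 1) with y_k^p = 0 and δ^{p^k}(y_k) = 1 for all 0 ≤ k ≤ d−1. Then there exists an iterative δ-descent {x^[i] : 0 ≤ i < p^d} of rank 1 and exponent d with x^[1] = y_0. -/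
/-!
The family is built one base-`p` digit at a time. Let `x^[i]`, `i < N = p ^ k`, be an iterative
descent of exponent `k` that vanishes from `N` on and has `(x^[i]) ^ p = 0` for `i > 0`. The
alternating sum `z = ± ∑_{j < N} (-1) ^ j x^[j] δ^j(y_k)` telescopes to `δ z = x^[N-1]` because
`δ^N(y_k) = 1`, and `z ^ p = 0` by additivity of Frobenius. Then `x^[qN + r] := x^[r] z^q / q!`
(`r < N`, `q < p`) is a descent of exponent `k + 1` with the same properties: the product rule
splits into those of the two factors by the block form of Lucas's theorem
`C(n, m) ≡ C(n / N, m / N) C(n % N, m % N) (mod p)`, a carry `r + r' ≥ N` killing both sides.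
-/

open Nat

/-- A family `x : ℕ → A` (thought of as `{x^[i] : 0 ≤ i < p^d}`) is an iterative
`δ`-descent of rank 1 and exponent `d`: `x 0 = 1`,
`x^[i] x^[j] = binom(i+j,j) x^[i+j]` (the binomial coefficient taken in `A`, i.e. mod `p`)
for `i + j < p^d`, and `δ^k(x^[i]) = x^[i-k]` for all `k` and `i < p^d`
(with `x^[m] := 0` for `m < 0`). -/
def IsIterativeDescentRankOne {K A : Type*} [CommRing K] [CommRing A] [Algebra K A]
    (p : ℕ) (δ : Derivation K A A) (d : ℕ) (x : ℕ → A) : Prop :=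
  x 0 = 1 ∧
  (∀ i j : ℕ, i + j < p ^ d → x i * x j = ((i + j).choose j : A) * x (i + j)) ∧
  (∀ k i : ℕ, i < p ^ d → (⇑δ)^[k] (x i) = if k ≤ i then x (i - k) else 0)

section Lucas

variable {p : ℕ} [Fact p.Prime]

theorem Nat.choose_modEq_choose_div_mul_choose_mod (k n m : ℕ) :
    n.choose m ≡ (n / p ^ k).choose (m / p ^ k) * (n % p ^ k).choose (m % p ^ k) [MOD p] := by
  have hpk : 0 < p ^ k := pow_pos (Fact.out : p.Prime).pos k
  have hdigit : ∀ a, ∀ i ∈ Finset.range k, a % p ^ k / p ^ i % p = a / p ^ i % p := by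
    intro a i hi
    have hik := Finset.mem_range.1 hi
    rw [show p ^ k = p ^ i * p ^ (k - i) by rw [← pow_add, Nat.add_sub_cancel' hik.le],
      Nat.mod_mul_right_div_self, Nat.mod_mod_of_dvd _ (dvd_pow_self p (by omega))]
  have hlow := Choose.choose_modEq_prod_range_choose_nat (Nat.mod_lt n hpk) (Nat.mod_lt m hpk)
  rw [Finset.prod_congr rfl fun i hi => by rw [hdigit n i hi, hdigit m i hi]] at hlow
  rw [← Int.natCast_modEq_iff]
  push_cast
  exact (Choose.choose_modEq_choose_mul_prod_range_choose k).trans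
    ((Int.natCast_modEq_iff.2 hlow.symm).mul_left _)

variable {A : Type*} [CommRing A] [CharP A p]

theorem cast_choose_add_of_mod_add_mod_lt (k : ℕ) {i j : ℕ}
    (h : i % p ^ k + j % p ^ k < p ^ k) :
    ((i + j).choose j : A) = ((i / p ^ k + j / p ^ k).choose (j / p ^ k) : A) *
      ((i % p ^ k + j % p ^ k).choose (j % p ^ k) : A) := by
  have := Nat.choose_modEq_choose_div_mul_choose_mod k (i + j) j (p := p)
  rw [Nat.add_div_eq_of_add_mod_lt h, Nat.add_mod_of_add_mod_lt h] at this
  exact_mod_cast (CharP.natCast_eq_natCast A p).2 this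

theorem cast_choose_add_of_le_mod_add_mod (k : ℕ) {i j : ℕ}
    (h : p ^ k ≤ i % p ^ k + j % p ^ k) :
    ((i + j).choose j : A) = 0 := by
  have := Nat.choose_modEq_choose_div_mul_choose_mod k (i + j) j (p := p)
  have hmod := Nat.add_mod_add_of_le_add_mod h
  have hi := Nat.mod_lt i (pow_pos (Fact.out : p.Prime).pos k)
  rw [Nat.choose_eq_zero_of_lt (n := (i + j) % p ^ k) (by omega), mul_zero] at this
  exact (CharP.cast_eq_zero_iff A p _).2 (Nat.modEq_zero_iff_dvd.1 this)

end Lucas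

section DividedPower

variable (K : Type*) {A : Type*} [Field K] [CommRing A] [Algebra K A]

-- For `q ≥ p` the factor `(q ! : K)⁻¹` is the junk value `0`, harmless once `z ^ p = 0`.
noncomputable def dividedPow (z : A) (q : ℕ) : A := (q ! : K)⁻¹ • z ^ q

variable {K} {p : ℕ} {z : A}

theorem dividedPow_eq_zero_of_le (hz : z ^ p = 0) {q : ℕ} (hq : p ≤ q) :
    dividedPow K z q = 0 := by
  rw [dividedPow, pow_eq_zero_of_le hq hz, smul_zero]

theorem dividedPow_pow_eq_zero (hz : z ^ p = 0) {q : ℕ} (hq : 0 < q) :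
    dividedPow K z q ^ p = 0 := by
  rw [dividedPow, smul_pow, ← pow_mul, pow_eq_zero_of_le (Nat.le_mul_of_pos_left p hq) hz,
    smul_zero]

variable [Fact p.Prime] [CharP K p]

theorem cast_factorial_ne_zero_of_lt {n : ℕ} (hn : n < p) : (n ! : K) ≠ 0 := by
  rw [Ne, CharP.cast_eq_zero_iff K p, (Fact.out : p.Prime).dvd_factorial]
  omega

@[simp]
theorem dividedPow_zero (z : A) : dividedPow K z 0 = 1 := by
  simp [dividedPow]

@[simp]
theorem dividedPow_one (z : A) : dividedPow K z 1 = z := by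
  simp [dividedPow]

theorem dividedPow_mul_dividedPow (hz : z ^ p = 0) (q r : ℕ) :
    dividedPow K z q * dividedPow K z r = ((q + r).choose r : A) * dividedPow K z (q + r) := by
  rcases lt_or_ge (q + r) p with hqr | hqr
  · have hfact : ((q + r).choose r : K) * (r ! : K) * (q ! : K) = ((q + r) ! : K) := by
      exact_mod_cast congrArg (Nat.cast : ℕ → K) (by
        simpa using Nat.choose_mul_factorial_mul_factorial (Nat.le_add_left r q))
    have hq := cast_factorial_ne_zero_of_lt (K := K) (show q < p by omega)
    have hr := cast_factorial_ne_zero_of_lt (K := K) (show r < p by omega)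
    have hC : ((q + r).choose r : K) ≠ 0 :=
      left_ne_zero_of_mul (left_ne_zero_of_mul (hfact ▸ cast_factorial_ne_zero_of_lt hqr))
    rw [dividedPow, dividedPow, dividedPow, smul_mul_smul_comm, ← pow_add,
      ← map_natCast (algebraMap K A), ← Algebra.smul_def, smul_smul]
    congr 1
    rw [← hfact]
    field_simp
  · simp [dividedPow, ← pow_add, pow_eq_zero_of_le hqr hz]

theorem derivation_dividedPow_succ (δ : Derivation K A A) {q : ℕ} (hq : q + 1 < p) :
    δ (dividedPow K z (q + 1)) = dividedPow K z q * δ z := by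
  have hq1 : ((q + 1 : ℕ) : K) ≠ 0 := by
    have := cast_factorial_ne_zero_of_lt (K := K) hq
    rw [Nat.factorial_succ, Nat.cast_mul] at this
    exact left_ne_zero_of_mul this
  rw [dividedPow, dividedPow, Derivation.map_smul, Derivation.leibniz_pow, Nat.add_sub_cancel,
    ← Nat.cast_smul_eq_nsmul K, smul_smul, smul_eq_mul, smul_mul_assoc, Nat.factorial_succ]
  congr 1
  push_cast at hq1 ⊢
  field_simp

end DividedPower

theorem Derivation.apply_sum_range_alternating {R A : Type*} [CommRing R] [CommRing A]
    [Algebra R A] (δ : Derivation R A A) (x : ℕ → A) (y : A) (n : ℕ) (hx₀ : δ (x 0) = 0)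
    (hx : ∀ i < n, δ (x (i + 1)) = x i) :
    δ (∑ j ∈ Finset.range (n + 1), (-1 : ℤ) ^ j • (x j * δ^[j] y)) =
      (-1 : ℤ) ^ n • (x n * δ^[n + 1] y) := by
  induction n with
  | zero => simp [hx₀]
  | succ n ih =>
    rw [Finset.sum_range_succ, map_add, ih fun i hi => hx i (by omega), map_zsmul,
      Derivation.leibniz, hx n (by omega), ← Function.iterate_succ_apply' δ, pow_succ]
    simp only [smul_eq_mul, mul_neg_one, neg_smul, smul_add]
    ring

section Descent

variable {K A : Type*} [Field K] [CommRing A] [Algebra K A]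

structure IsTruncatedDescent (p : ℕ) (δ : Derivation K A A) (k : ℕ) (x : ℕ → A) :
    Prop where
  apply_zero : x 0 = 1
  apply_of_le : ∀ m, p ^ k ≤ m → x m = 0
  mul : ∀ i j, x i * x j = ((i + j).choose j : A) * x (i + j)
  derivation_succ : ∀ i, i + 1 < p ^ k → δ (x (i + 1)) = x i
  pow_eq_zero : ∀ j, 0 < j → x j ^ p = 0

variable {p : ℕ} {δ : Derivation K A A} {k : ℕ} {x : ℕ → A}

namespace IsTruncatedDescent

theorem iterate_derivation (hx : IsTruncatedDescent p δ k x) (m : ℕ) {i : ℕ}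
    (hi : i < p ^ k) :
    δ^[m] (x i) = if m ≤ i then x (i - m) else 0 := by
  induction m with
  | zero => simp
  | succ m ih =>
    rw [Function.iterate_succ_apply', ih]
    by_cases hmi : m + 1 ≤ i
    · rw [if_pos (by omega), if_pos hmi, ← hx.derivation_succ (i - (m + 1)) (by omega)]
      congr 2
      omega
    · rw [if_neg hmi]
      by_cases hm : m = i
      · rw [if_pos hm.le, hm, Nat.sub_self, hx.apply_zero, Derivation.map_one_eq_zero]
      · rw [if_neg (by omega), map_zero]

theorem isIterativeDescentRankOne (hx : IsTruncatedDescent p δ k x) :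
    IsIterativeDescentRankOne p δ k x :=
  ⟨hx.apply_zero, fun i j _ => hx.mul i j, fun m _ hi => hx.iterate_derivation m hi⟩

theorem exists_derivation_eq [Fact p.Prime] [CharP A p] (hx : IsTruncatedDescent p δ k x)
    {y : A} (hy : y ^ p = 0) (hδy : δ^[p ^ k] y = 1) :
    ∃ z, δ z = x (p ^ k - 1) ∧ z ^ p = 0 := by
  obtain ⟨n, hn⟩ :=
    Nat.exists_eq_add_one_of_ne_zero (pow_ne_zero k (Fact.out : p.Prime).ne_zero)
  set S := ∑ j ∈ Finset.range (n + 1), (-1 : ℤ) ^ j • (x j * δ^[j] y)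
  have hS : δ S = (-1 : ℤ) ^ n • x n := by
    rw [δ.apply_sum_range_alternating x y n (by rw [hx.apply_zero, δ.map_one_eq_zero])
      fun i hi => hx.derivation_succ i (by omega), ← hn, hδy, mul_one]
  have hSp : S ^ p = 0 := by
    rw [sum_pow_char]
    refine Finset.sum_eq_zero fun j _ => ?_
    rw [smul_pow, mul_pow]
    rcases Nat.eq_zero_or_pos j with rfl | hj
    · simp [hy]
    · rw [hx.pow_eq_zero j hj, zero_mul, smul_zero]
  refine ⟨(-1 : ℤ) ^ n • S, ?_, ?_⟩
  · rw [map_zsmul, hS, smul_smul, ← mul_pow, neg_one_mul, neg_neg, one_pow, one_smul, hn,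
      Nat.add_sub_cancel]
  · rw [smul_pow, hSp, smul_zero]

end IsTruncatedDescent

end Descent

section Extension

variable (K : Type*) {A : Type*} [Field K] [CommRing A] [Algebra K A]

noncomputable def descentExtension (N : ℕ) (x : ℕ → A) (z : A) (i : ℕ) : A :=
  x (i % N) * dividedPow K z (i / N)

variable {K}

theorem descentExtension_mul_add {N r : ℕ} (hr : r < N) (x : ℕ → A) (z : A) (q : ℕ) :
    descentExtension K N x z (N * q + r) = x r * dividedPow K z q := by
  rw [descentExtension, Nat.mul_add_mod, Nat.mod_eq_of_lt hr, Nat.mul_add_div (by omega),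
    Nat.div_eq_of_lt hr, add_zero]

variable {p : ℕ} {δ : Derivation K A A} {k : ℕ} {x : ℕ → A} {z : A}

namespace IsTruncatedDescent

theorem descentExtension_pow_eq_zero (hx : IsTruncatedDescent p δ k x) (hz : z ^ p = 0)
    {j : ℕ} (hj : 0 < j) : descentExtension K (p ^ k) x z j ^ p = 0 := by
  rw [descentExtension, mul_pow]
  rcases Nat.eq_zero_or_pos (j % p ^ k) with h | h
  · have hq : 0 < j / p ^ k := by
      have := Nat.div_add_mod j (p ^ k)
      rw [h] at this
      exact Nat.pos_of_ne_zero fun h0 => by simp [h0] at this; omega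
    rw [dividedPow_pow_eq_zero hz hq, mul_zero]
  · rw [hx.pow_eq_zero _ h, zero_mul]

variable [Fact p.Prime] [CharP K p]

theorem descentExtension_mul [CharP A p] (hx : IsTruncatedDescent p δ k x) (hz : z ^ p = 0)
    (i j : ℕ) :
    descentExtension K (p ^ k) x z i * descentExtension K (p ^ k) x z j =
      ((i + j).choose j : A) * descentExtension K (p ^ k) x z (i + j) := by
  simp only [descentExtension]
  rw [mul_mul_mul_comm, hx.mul, dividedPow_mul_dividedPow hz]
  rcases lt_or_ge (i % p ^ k + j % p ^ k) (p ^ k) with h | h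
  · rw [cast_choose_add_of_mod_add_mod_lt k h, Nat.add_div_eq_of_add_mod_lt h,
      Nat.add_mod_of_add_mod_lt h]
    ring
  · rw [cast_choose_add_of_le_mod_add_mod k h, hx.apply_of_le _ h]
    ring

theorem descentExtension_derivation_succ (hx : IsTruncatedDescent p δ k x)
    (hδz : δ z = x (p ^ k - 1)) {i : ℕ} (hi : i + 1 < p ^ (k + 1)) :
    δ (descentExtension K (p ^ k) x z (i + 1)) = descentExtension K (p ^ k) x z i := by
  rw [pow_succ] at hi
  set N := p ^ k
  have hN : 0 < N := pow_pos (Fact.out : p.Prime).pos k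
  obtain ⟨q, r, hr, rfl⟩ : ∃ q r, r < N ∧ i = N * q + r :=
    ⟨i / N, i % N, Nat.mod_lt i hN, (Nat.div_add_mod i N).symm⟩
  rcases (show r + 1 < N ∨ r + 1 = N by omega) with hr₁ | hr₁
  · have hq : q < p := Nat.lt_of_mul_lt_mul_left (a := N) (by omega)
    have hcross : x (r + 1) * δ (dividedPow K z q) = 0 := by
      cases q with
      | zero => rw [dividedPow_zero, δ.map_one_eq_zero, mul_zero]
      | succ q =>
        rw [derivation_dividedPow_succ δ hq, hδz, mul_left_comm, hx.mul,
          hx.apply_of_le _ (by omega), mul_zero, mul_zero]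
    rw [add_assoc, descentExtension_mul_add hr₁, descentExtension_mul_add hr, Derivation.leibniz,
      hx.derivation_succ r hr₁, smul_eq_mul, smul_eq_mul, hcross, zero_add, mul_comm]
  · have hq : q + 1 < p := Nat.lt_of_mul_lt_mul_left (a := N) (by rw [mul_add]; omega)
    rw [show N * q + r + 1 = N * (q + 1) + 0 by rw [add_assoc, hr₁]; ring,
      descentExtension_mul_add hN, descentExtension_mul_add hr, hx.apply_zero, one_mul,
      derivation_dividedPow_succ δ hq, hδz, show N - 1 = r by omega, mul_comm]

theorem extend [CharP A p] (hx : IsTruncatedDescent p δ k x) (hz : z ^ p = 0)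
    (hδz : δ z = x (p ^ k - 1)) :
    IsTruncatedDescent p δ (k + 1) (descentExtension K (p ^ k) x z) where
  apply_zero := by simp [descentExtension, hx.apply_zero]
  apply_of_le m hm := by
    have hq : p ≤ m / p ^ k := by
      rw [Nat.le_div_iff_mul_le (pow_pos (Fact.out : p.Prime).pos k), mul_comm, ← pow_succ]
      exact hm
    rw [descentExtension, dividedPow_eq_zero_of_le hz hq, mul_zero]
  mul := hx.descentExtension_mul hz
  derivation_succ _ hi := hx.descentExtension_derivation_succ hδz hi
  pow_eq_zero _ hj := hx.descentExtension_pow_eq_zero hz hj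

end IsTruncatedDescent

end Extension

section Existence

variable {K A : Type*} [Field K] [CommRing A] [Algebra K A] {p : ℕ} [Fact p.Prime]

theorem isTruncatedDescent_zero (δ : Derivation K A A) :
    IsTruncatedDescent p δ 0 fun i => if i = 0 then (1 : A) else 0 where
  apply_zero := if_pos rfl
  apply_of_le m hm := if_neg (by rw [pow_zero] at hm; omega)
  mul i j := by
    rcases Nat.eq_zero_or_pos i with rfl | hi <;> rcases Nat.eq_zero_or_pos j with rfl | hj <;>
      simp [*, Nat.pos_iff_ne_zero.1]
  derivation_succ i hi := by rw [pow_zero] at hi; omega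
  pow_eq_zero j hj := by rw [if_neg hj.ne', zero_pow (Fact.out : p.Prime).ne_zero]

theorem exists_isTruncatedDescent [CharP K p] [CharP A p] (δ : Derivation K A A) {y : ℕ → A}
    {d : ℕ} (hd : 1 ≤ d) (hy : ∀ k < d, y k ^ p = 0 ∧ δ^[p ^ k] (y k) = 1) :
    ∃ x, IsTruncatedDescent p δ d x ∧ x 1 = y 0 := by
  induction d, hd using Nat.le_induction with
  | base =>
    obtain ⟨hy₀, hδy₀⟩ := hy 0 one_pos
    refine ⟨_, (isTruncatedDescent_zero δ).extend hy₀ ?_, ?_⟩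
    · simpa using hδy₀
    · simp [descentExtension]
  | succ d hd ih =>
    obtain ⟨x, hx, hx₁⟩ := ih fun k hk => hy k (by omega)
    obtain ⟨z, hδz, hz⟩ := hx.exists_derivation_eq (hy d (by omega)).1 (hy d (by omega)).2
    refine ⟨_, hx.extend hz hδz, ?_⟩
    have hN : 1 < p ^ d := Nat.one_lt_pow (by omega) (Fact.out : p.Prime).one_lt
    simpa [descentExtension, Nat.mod_eq_of_lt hN, Nat.div_eq_of_lt hN] using hx₁

end Existence

/-- **Theorem (existence of an iterative δ-descent of rank 1).**
Let `A` be a commutative algebra over a field `K` of characteristic `p > 0` and `δ` a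
`K`-derivation of `A`.  Suppose there are elements `y_0, …, y_{d-1} ∈ A` (`d ≥ 1`) with
`y_k^p = 0` and `δ^{p^k}(y_k) = 1` for `0 ≤ k ≤ d-1`.  Then there exists an iterative
`δ`-descent `{x^[i] : 0 ≤ i < p^d}` of rank 1 and exponent `d` with `x^[1] = y_0`. -/
theorem iterative_descent_rank_one_exists
    {K A : Type*} [Field K] [CommRing A] [Algebra K A]
    (p : ℕ) (hp : p.Prime) [CharP K p]
    (δ : Derivation K A A) (d : ℕ) (hd : 1 ≤ d) (y : ℕ → A)
    (hy : ∀ k, k ≤ d - 1 → y k ^ p = 0 ∧ (⇑δ)^[p ^ k] (y k) = 1) :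
    ∃ x : ℕ → A, IsIterativeDescentRankOne p δ d x ∧ x 1 = y 0 := by
  rcases subsingleton_or_nontrivial A with hA | hA
  · exact ⟨fun _ => 1, ⟨Subsingleton.elim _ _, fun _ _ _ => Subsingleton.elim _ _,
      fun _ _ _ => Subsingleton.elim _ _⟩, Subsingleton.elim _ _⟩
  have := Fact.mk hp
  have := charP_of_injective_algebraMap' K (A := A) p
  obtain ⟨x, hx, hx₁⟩ := exists_isTruncatedDescent δ hd fun k hk => hy k (by omega)
  exact ⟨x, hx.isIterativeDescentRankOne, hx₁⟩
end
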